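/- Let F : F_2^n → F_2^n be a quadratic APN function with ortho-derivative π_F. Let A(x)=A_0 x + a and B(x)=B_0 x + b be affine permutations of F_2^n and C : F_2^n → F_2^n an affine map, and set G = A ∘ F ∘ B + C. Then G is a quadratic APN function and its ortho-derivative is π_G = (A_0^T)^{-1} ∘ π_F ∘ B_0. -/

import Mathlib

open Matrix

/-- `F : F_2^n → F_2^m` is quadratic: each coordinate is the evaluation of a
polynomial of total degree at most 2 (equivalently, its ANF has degree ≤ 2). -/
def IsQuadratic {n m : ℕ} (F : (Fin n → ZMod 2) → (Fin m → ZMod 2)) : Prop :=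
  ∀ i : Fin m, ∃ p : MvPolynomial (Fin n) (ZMod 2),
    p.totalDegree ≤ 2 ∧ ∀ x, F x i = MvPolynomial.eval x p

/-- Linear part of the Jacobian: entries `Δ_{e_j}F_i(x) + Δ_{e_j}F_i(0)`. -/
def Jlin {n m : ℕ} (F : (Fin n → ZMod 2) → (Fin m → ZMod 2))
    (x : Fin n → ZMod 2) : Matrix (Fin m) (Fin n) (ZMod 2) :=
  Matrix.of fun i j =>
    F (x + Pi.single j 1) i + F x i + F (Pi.single j 1) i + F 0 i

/-- DDT entry `δ_F(a,b) = #{x : F(x+a)+F(x)=b}`. -/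
def ddt {n m : ℕ} (F : (Fin n → ZMod 2) → (Fin m → ZMod 2))
    (a : Fin n → ZMod 2) (b : Fin m → ZMod 2) : ℕ :=
  (Finset.univ.filter fun x => F (x + a) + F x = b).card

/-! Each of the three properties survives, separately, right composition with an affine
permutation `x ↦ B₀x + b`, left composition with a linear permutation `A₀`, and addition of an
affine map. Degree ≤ 2 survives substitution of degree-1 polynomials, and the DDT is only
re-indexed. For the ortho-derivative, the second difference `F x + F (x + a) + F 0 + F a` is
unchanged by adding an affine map, is multiplied by `A₀` under left composition (and
`⟨(A₀ᵀ)⁻¹u, A₀w⟩ = ⟨u, w⟩`), and under right composition it is, in characteristic 2, the sum of the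
second differences of `F` at `(B₀x + b, B₀a)` and at `(b, B₀a)`, both orthogonal to `π_F(B₀a)`. -/

namespace MvPolynomial

variable {σ τ R : Type*} [CommSemiring R]

theorem totalDegree_aeval_le (f : σ → MvPolynomial τ R) (p : MvPolynomial σ R) {e : ℕ}
    (hf : ∀ j, (f j).totalDegree ≤ e) : (aeval f p).totalDegree ≤ p.totalDegree * e := by
  conv_lhs => rw [p.as_sum, map_sum]
  refine totalDegree_finsetSum_le fun v hv => ?_
  rw [aeval_monomial, ← C_eq_algebraMap]
  refine (totalDegree_mul _ _).trans ?_
  rw [totalDegree_C, zero_add, Finsupp.prod]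
  calc (∏ j ∈ v.support, f j ^ v j).totalDegree
      ≤ ∑ j ∈ v.support, v j * e :=
        (totalDegree_finsetProd _ _).trans <| Finset.sum_le_sum fun j _ =>
          (totalDegree_pow _ _).trans (Nat.mul_le_mul_left _ (hf j))
    _ = (∑ j ∈ v.support, v j) * e := (Finset.sum_mul ..).symm
    _ ≤ p.totalDegree * e := Nat.mul_le_mul_right _ (le_totalDegree hv)

theorem eval_aeval (x : τ → R) (f : σ → MvPolynomial τ R) (p : MvPolynomial σ R) :
    eval x (aeval f p) = eval (fun j => eval x (f j)) p :=
  comp_aeval_apply f (aeval x) p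

variable [Fintype σ]

noncomputable def affineForm (w : σ → R) (r : R) : MvPolynomial σ R :=
  ∑ k, C (w k) * X k + C r

theorem totalDegree_affineForm_le (w : σ → R) (r : R) : (affineForm w r).totalDegree ≤ 1 := by
  refine (totalDegree_add _ _).trans (max_le (totalDegree_finsetSum_le fun k _ => ?_) ?_)
  · rw [C_mul_X_eq_monomial]
    exact (totalDegree_monomial_le _ _).trans (by simp)
  · simp

theorem eval_affineForm (x w : σ → R) (r : R) : eval x (affineForm w r) = w ⬝ᵥ x + r := by
  simp [affineForm, dotProduct]

end MvPolynomial

namespace Matrix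

variable {ι R : Type*} [Fintype ι] [DecidableEq ι] [CommRing R]

theorem mulVec_bijective_of_isUnit_det {A : Matrix ι ι R} (hA : IsUnit A.det) :
    Function.Bijective A.mulVec :=
  ⟨mulVec_injective_of_isUnit ((isUnit_iff_isUnit_det A).2 hA),
    mulVec_surjective_iff_isUnit.2 ((isUnit_iff_isUnit_det A).2 hA)⟩

theorem mulVec_ne_zero_of_isUnit_det {A : Matrix ι ι R} (hA : IsUnit A.det) {x : ι → R}
    (hx : x ≠ 0) : A *ᵥ x ≠ 0 :=
  (mulVec_bijective_of_isUnit_det hA).1.ne_iff' (mulVec_zero A) |>.2 hx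

theorem mulVec_eq_iff_eq_inv_mulVec {A : Matrix ι ι R} (hA : IsUnit A.det) {u v : ι → R} :
    A *ᵥ u = v ↔ u = A⁻¹ *ᵥ v := by
  constructor <;> rintro rfl
  · rw [mulVec_mulVec, nonsing_inv_mul _ hA, one_mulVec]
  · rw [mulVec_mulVec, mul_nonsing_inv _ hA, one_mulVec]

theorem inv_transpose_mulVec_dotProduct_mulVec {A : Matrix ι ι R} (hA : IsUnit A.det)
    (u w : ι → R) : (Aᵀ)⁻¹ *ᵥ u ⬝ᵥ A *ᵥ w = u ⬝ᵥ w := by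
  rw [dotProduct_mulVec, ← mulVec_transpose, mulVec_mulVec,
    mul_nonsing_inv _ (by rwa [det_transpose]), one_mulVec]

end Matrix

theorem ZMod.two_vec_add_self {ι : Type*} (v : ι → ZMod 2) : v + v = 0 :=
  funext fun i => CharTwo.add_self_eq_zero (v i)

theorem ZMod.two_vec_add_eq_iff {ι : Type*} {u v w : ι → ZMod 2} : u + w = v ↔ u = v + w := by
  constructor <;> rintro rfl <;> rw [add_assoc, two_vec_add_self, add_zero]

section

variable {n m k : ℕ}

open MvPolynomial

theorem isQuadratic_affine (M : Matrix (Fin m) (Fin n) (ZMod 2)) (v : Fin m → ZMod 2) :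
    IsQuadratic fun x => M *ᵥ x + v := fun i =>
  ⟨affineForm (M i) (v i), (totalDegree_affineForm_le _ _).trans one_le_two,
    fun x => by rw [eval_affineForm]; rfl⟩

theorem IsQuadratic.add {F G : (Fin n → ZMod 2) → (Fin m → ZMod 2)} (hF : IsQuadratic F)
    (hG : IsQuadratic G) : IsQuadratic fun x => F x + G x := fun i => by
  obtain ⟨p, hp, hpF⟩ := hF i
  obtain ⟨q, hq, hqG⟩ := hG i
  exact ⟨p + q, (totalDegree_add _ _).trans (max_le hp hq), fun x => by simp [hpF, hqG]⟩

theorem IsQuadratic.mulVec_left {F : (Fin n → ZMod 2) → (Fin m → ZMod 2)} (hF : IsQuadratic F)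
    (A : Matrix (Fin k) (Fin m) (ZMod 2)) : IsQuadratic fun x => A *ᵥ F x := fun i => by
  choose p hp hpF using hF
  refine ⟨∑ j, A i j • p j, totalDegree_finsetSum_le fun j _ =>
    (totalDegree_smul_le _ _).trans (hp j), fun x => ?_⟩
  simp [hpF, mulVec, dotProduct]

theorem IsQuadratic.comp_affine {F : (Fin n → ZMod 2) → (Fin m → ZMod 2)} (hF : IsQuadratic F)
    (B : Matrix (Fin n) (Fin k) (ZMod 2)) (b : Fin n → ZMod 2) :
    IsQuadratic fun x => F (B *ᵥ x + b) := fun i => by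
  obtain ⟨p, hp, hpF⟩ := hF i
  refine ⟨aeval (fun j => affineForm (B j) (b j)) p, ?_, fun x => ?_⟩
  · calc _ ≤ p.totalDegree * 1 := totalDegree_aeval_le _ _ fun j => totalDegree_affineForm_le _ _
      _ ≤ 2 := by simpa using hp
  · simp only [eval_aeval, eval_affineForm, hpF]
    rfl

theorem ddt_add_affine (F : (Fin n → ZMod 2) → (Fin m → ZMod 2))
    (M : Matrix (Fin m) (Fin n) (ZMod 2)) (v : Fin m → ZMod 2) (α : Fin n → ZMod 2)
    (β : Fin m → ZMod 2) :
    ddt (fun x => F x + (M *ᵥ x + v)) α β = ddt F α (β + M *ᵥ α) := by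
  unfold ddt
  congr 1
  refine Finset.filter_congr fun x _ => ?_
  have hdiff : F (x + α) + (M *ᵥ (x + α) + v) + (F x + (M *ᵥ x + v))
      = F (x + α) + F x + M *ᵥ α := by
    rw [mulVec_add]
    linear_combination ZMod.two_vec_add_self (M *ᵥ x + v)
  rw [hdiff, ZMod.two_vec_add_eq_iff]

theorem ddt_mulVec_left (F : (Fin n → ZMod 2) → (Fin m → ZMod 2))
    {A : Matrix (Fin m) (Fin m) (ZMod 2)} (hA : IsUnit A.det) (α : Fin n → ZMod 2)
    (β : Fin m → ZMod 2) :
    ddt (fun x => A *ᵥ F x) α β = ddt F α (A⁻¹ *ᵥ β) := by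
  unfold ddt
  simp_rw [← mulVec_add, mulVec_eq_iff_eq_inv_mulVec hA]

theorem ddt_comp_affine (F : (Fin n → ZMod 2) → (Fin m → ZMod 2))
    {B : Matrix (Fin n) (Fin n) (ZMod 2)} (hB : IsUnit B.det) (b α : Fin n → ZMod 2)
    (β : Fin m → ZMod 2) :
    ddt (fun x => F (B *ᵥ x + b)) α β = ddt F (B *ᵥ α) β :=
  Finset.card_bijective _ ((Equiv.addRight b).bijective.comp (mulVec_bijective_of_isUnit_det hB))
    fun x => by simp [mulVec_add, add_right_comm]

def secondDiff (F : (Fin n → ZMod 2) → (Fin m → ZMod 2)) (x a : Fin n → ZMod 2) :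
    Fin m → ZMod 2 :=
  F x + F (x + a) + F 0 + F a

theorem secondDiff_add_affine (F : (Fin n → ZMod 2) → (Fin m → ZMod 2))
    (M : Matrix (Fin m) (Fin n) (ZMod 2)) (v : Fin m → ZMod 2) (x a : Fin n → ZMod 2) :
    secondDiff (fun x => F x + (M *ᵥ x + v)) x a = secondDiff F x a := by
  simp only [secondDiff, mulVec_add, mulVec_zero]
  linear_combination ZMod.two_vec_add_self (M *ᵥ x + M *ᵥ a) + 2 * ZMod.two_vec_add_self v

theorem secondDiff_mulVec_left (F : (Fin n → ZMod 2) → (Fin m → ZMod 2))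
    (A : Matrix (Fin m) (Fin m) (ZMod 2)) (x a : Fin n → ZMod 2) :
    secondDiff (fun x => A *ᵥ F x) x a = A *ᵥ secondDiff F x a := by
  simp only [secondDiff, mulVec_add]

theorem secondDiff_comp_affine (F : (Fin n → ZMod 2) → (Fin m → ZMod 2))
    (B : Matrix (Fin n) (Fin n) (ZMod 2)) (b x a : Fin n → ZMod 2) :
    secondDiff (fun x => F (B *ᵥ x + b)) x a
      = secondDiff F (B *ᵥ x + b) (B *ᵥ a) + secondDiff F b (B *ᵥ a) := by
  simp only [secondDiff, mulVec_add, mulVec_zero, zero_add, add_right_comm (B *ᵥ x) (B *ᵥ a) b,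
    add_comm (B *ᵥ a) b]
  linear_combination -ZMod.two_vec_add_self (F 0 + F (B *ᵥ a))

def IsOrthoDerivative (F π : (Fin n → ZMod 2) → (Fin m → ZMod 2)) : Prop :=
  π 0 = 0 ∧ (∀ x, x ≠ 0 → π x ≠ 0) ∧ ∀ x a, π a ⬝ᵥ secondDiff F x a = 0

namespace IsOrthoDerivative

variable {F π : (Fin n → ZMod 2) → (Fin m → ZMod 2)}

theorem add_affine (h : IsOrthoDerivative F π) (M : Matrix (Fin m) (Fin n) (ZMod 2))
    (v : Fin m → ZMod 2) : IsOrthoDerivative (fun x => F x + (M *ᵥ x + v)) π := by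
  obtain ⟨h0, hne, horth⟩ := h
  exact ⟨h0, hne, fun x a => by rw [secondDiff_add_affine]; exact horth x a⟩

theorem mulVec_left (h : IsOrthoDerivative F π) {A : Matrix (Fin m) (Fin m) (ZMod 2)}
    (hA : IsUnit A.det) : IsOrthoDerivative (fun x => A *ᵥ F x) (fun a => (Aᵀ)⁻¹ *ᵥ π a) := by
  obtain ⟨h0, hne, horth⟩ := h
  have hAT : IsUnit (Aᵀ)⁻¹.det := by
    rw [det_nonsing_inv, det_transpose]
    exact hA.ringInverse
  refine ⟨by simp [h0], fun x hx => mulVec_ne_zero_of_isUnit_det hAT (hne x hx), fun x a => ?_⟩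
  rw [secondDiff_mulVec_left, inv_transpose_mulVec_dotProduct_mulVec hA, horth]

theorem comp_affine (h : IsOrthoDerivative F π) {B : Matrix (Fin n) (Fin n) (ZMod 2)}
    (hB : IsUnit B.det) (b : Fin n → ZMod 2) :
    IsOrthoDerivative (fun x => F (B *ᵥ x + b)) (fun a => π (B *ᵥ a)) := by
  obtain ⟨h0, hne, horth⟩ := h
  refine ⟨by simp [h0], fun x hx => hne _ (mulVec_ne_zero_of_isUnit_det hB hx), fun x a => ?_⟩
  rw [secondDiff_comp_affine, dotProduct_add, horth, horth, add_zero]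

end IsOrthoDerivative

end

theorem orthoDerivative_of_EA_equivalent {n : ℕ}
    (F G : (Fin n → ZMod 2) → (Fin n → ZMod 2)) (hF : IsQuadratic F)
    (hAPN : ∀ a : Fin n → ZMod 2, a ≠ 0 → ∀ b : Fin n → ZMod 2, ddt F a b ≤ 2)
    (πF : (Fin n → ZMod 2) → (Fin n → ZMod 2))
    (hπ0 : πF 0 = 0) (hπne : ∀ x : Fin n → ZMod 2, x ≠ 0 → πF x ≠ 0)
    (hπ : ∀ x a : Fin n → ZMod 2,
      dotProduct (πF a) (F x + F (x + a) + F 0 + F a) = 0)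
    (A0 B0 : Matrix (Fin n) (Fin n) (ZMod 2)) (a b : Fin n → ZMod 2)
    (C0 : Matrix (Fin n) (Fin n) (ZMod 2)) (c : Fin n → ZMod 2)
    (hA0 : IsUnit A0.det) (hB0 : IsUnit B0.det)
    (hGeq : ∀ x, G x = A0.mulVec (F (B0.mulVec x + b)) + a + (C0.mulVec x + c)) :
    IsQuadratic G ∧
    (∀ α : Fin n → ZMod 2, α ≠ 0 → ∀ β : Fin n → ZMod 2, ddt G α β ≤ 2) ∧
    ((fun z => (A0ᵀ)⁻¹.mulVec (πF (B0.mulVec z))) 0 = 0) ∧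
    (∀ x : Fin n → ZMod 2, x ≠ 0 → (A0ᵀ)⁻¹.mulVec (πF (B0.mulVec x)) ≠ 0) ∧
    (∀ x α : Fin n → ZMod 2,
      dotProduct ((A0ᵀ)⁻¹.mulVec (πF (B0.mulVec α)))
        (G x + G (x + α) + G 0 + G α) = 0) := by
  obtain rfl : G = fun x => A0 *ᵥ F (B0 *ᵥ x + b) + (C0 *ᵥ x + (a + c)) :=
    funext fun x => by rw [hGeq]; abel
  have hπF : IsOrthoDerivative F πF := ⟨hπ0, hπne, hπ⟩
  obtain ⟨hπG0, hπGne, hπG⟩ := ((hπF.comp_affine hB0 b).mulVec_left hA0).add_affine C0 (a + c)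
  refine ⟨((hF.comp_affine B0 b).mulVec_left A0).add (isQuadratic_affine C0 (a + c)),
    fun α hα β => ?_, hπG0, hπGne, hπG⟩
  rw [ddt_add_affine, ddt_mulVec_left _ hA0, ddt_comp_affine _ hB0]
  exact hAPN _ (mulVec_ne_zero_of_isUnit_det hB0 hα) _
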